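/- arXiv:2107.00537 — 11 statements merged into one kernel-verified Lean document; each statement's English description precedes it below -/
import Mathlib

section
/- For all r₁, r₂ ∈ ℛ with r₁ ≤ r₂, the pushforward of P under R gives half-open intervals their length: P({x ∈ X : r₁ < R(x) ≤ r₂}) = r₂ − r₁. (Part 1 of the proof of the Transformation Theorem A.2) -/
open MeasureTheory Set

/-- Part 1 of the proof of the Transformation Theorem A.2: the pushforward of `P`
under `R` gives half-open intervals their length. -/
theorem pushforward_interval_length
    {X : Type*} [MeasurableSpace X] (P : Measure X) [IsProbabilityMeasure P]
    (Rset : Set ℝ) (hRclosed : IsClosed Rset) (hRsub : Rset ⊆ Icc (0:ℝ) 1)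
    (h0 : (0:ℝ) ∈ Rset) (h1 : (1:ℝ) ∈ Rset)
    (O : ℝ → Set X)
    (hOmeas : ∀ r ∈ Rset, MeasurableSet (O r))
    (hOmono : ∀ r₁ ∈ Rset, ∀ r₂ ∈ Rset, r₁ ≤ r₂ → O r₁ ⊆ O r₂)
    (hOP : ∀ r ∈ Rset, P (O r) = ENNReal.ofReal r)
    (R : X → ℝ)
    (hR : ∀ x : X, IsLeast {r | r ∈ Rset ∧ x ∈ O r} (R x)) :
    ∀ r₁ ∈ Rset, ∀ r₂ ∈ Rset, r₁ ≤ r₂ →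
      P {x : X | r₁ < R x ∧ R x ≤ r₂} = ENNReal.ofReal (r₂ - r₁) := by
  intro r₁ hr₁ r₂ hr₂ h12
  have key : ∀ r ∈ Rset, ∀ x : X, x ∈ O r ↔ R x ≤ r := by
    intro r hr x
    constructor
    · intro hx
      exact (hR x).2 ⟨hr, hx⟩
    · intro hle
      exact hOmono (R x) (hR x).1.1 r hr hle (hR x).1.2
  have hset : {x : X | r₁ < R x ∧ R x ≤ r₂} = O r₂ \ O r₁ := by
    ext x
    simp only [mem_setOf_eq, mem_diff, key r₁ hr₁ x, key r₂ hr₂ x, not_le]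
    tauto
  rw [hset, measure_diff (hOmono r₁ hr₁ r₂ hr₂ h12)
    ((hOmeas r₁ hr₁).nullMeasurableSet) (measure_ne_top P _),
    hOP r₁ hr₁, hOP r₂ hr₂,
    ENNReal.ofReal_sub _ (hRsub hr₁).1]
end

section
/- For all r₁, r₂ ∈ ℛ with r₁ ≤ r₂, the preimage under N of the trace interval equals the full interval: {r ∈ [0,1] : N(r) ∈ (r₁, r₂] ∩ ℛ} = (r₁, r₂]; consequently the Lebesgue measure of this preimage is r₂ − r₁. (Part 2 of the proof of the Transformation Theorem A.2) -/
open MeasureTheory Set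

/-- Part 2 of the proof of the Transformation Theorem A.2: the preimage under `N` of
the trace interval `(r₁, r₂] ∩ ℛ` equals `(r₁, r₂]`, hence its Lebesgue measure is
`r₂ - r₁`. -/
theorem preimage_N_interval
    (Rset : Set ℝ) (hRclosed : IsClosed Rset) (hRsub : Rset ⊆ Icc (0:ℝ) 1)
    (h0 : (0:ℝ) ∈ Rset) (h1 : (1:ℝ) ∈ Rset)
    (N : ℝ → ℝ)
    (hN : ∀ r ∈ Icc (0:ℝ) 1, IsLeast {r' | r' ∈ Rset ∧ r ≤ r'} (N r)) :
    ∀ r₁ ∈ Rset, ∀ r₂ ∈ Rset, r₁ ≤ r₂ →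
      {r | r ∈ Icc (0:ℝ) 1 ∧ N r ∈ Ioc r₁ r₂ ∩ Rset} = Ioc r₁ r₂ ∧
      volume {r | r ∈ Icc (0:ℝ) 1 ∧ N r ∈ Ioc r₁ r₂ ∩ Rset} = ENNReal.ofReal (r₂ - r₁) := by
  intro r₁ hr₁ r₂ hr₂ h12
  have hset : {r | r ∈ Icc (0:ℝ) 1 ∧ N r ∈ Ioc r₁ r₂ ∩ Rset} = Ioc r₁ r₂ := by
    ext r
    simp only [mem_setOf_eq, mem_inter_iff, mem_Ioc]
    constructor
    · rintro ⟨hr01, ⟨⟨hgt, hle⟩, _⟩⟩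
      have hle' : r ≤ N r := (hN r hr01).1.2
      refine ⟨?_, le_trans hle' hle⟩
      by_contra h
      push_neg at h
      exact absurd ((hN r hr01).2 ⟨hr₁, h⟩) (not_le.mpr hgt)
    · intro ⟨hgt, hle⟩
      have hr01 : r ∈ Icc (0:ℝ) 1 :=
        ⟨le_trans (hRsub hr₁).1 hgt.le, le_trans hle (hRsub hr₂).2⟩
      obtain ⟨⟨hNmem, hrN⟩, hleast⟩ := hN r hr01
      exact ⟨hr01, ⟨⟨lt_of_lt_of_le hgt hrN, hleast ⟨hr₂, hle⟩⟩, hNmem⟩⟩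
  refine ⟨hset, ?_⟩
  rw [hset, Real.volume_Ioc]
end

section
/- Transformation Theorem: for every Borel measurable function f : [0,1] → ℝ that is either nonnegative or such that f ∘ R is P-integrable, ∫_{[0,1]} f(N(r)) dλ(r) = ∫_X f(R(x)) dP(x), where λ is Lebesgue measure. (Theorem A.2) -/
open MeasureTheory Set

/-- Transformation Theorem (Theorem A.2):
`∫_{[0,1]} f(N(r)) dλ(r) = ∫_X f(R(x)) dP(x)` for every Borel measurable
`f : [0,1] → ℝ` which is nonnegative or such that `f ∘ R` is `P`-integrable. -/
theorem transformation_theorem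
    {X : Type*} [MeasurableSpace X] (P : Measure X) [IsProbabilityMeasure P]
    (Rset : Set ℝ) (hRclosed : IsClosed Rset) (hRsub : Rset ⊆ Icc (0:ℝ) 1)
    (h0 : (0:ℝ) ∈ Rset) (h1 : (1:ℝ) ∈ Rset)
    (O : ℝ → Set X)
    (hOmeas : ∀ r ∈ Rset, MeasurableSet (O r))
    (hOmono : ∀ r₁ ∈ Rset, ∀ r₂ ∈ Rset, r₁ ≤ r₂ → O r₁ ⊆ O r₂)
    (hOP : ∀ r ∈ Rset, P (O r) = ENNReal.ofReal r)
    (R : X → ℝ)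
    (hR : ∀ x : X, IsLeast {r | r ∈ Rset ∧ x ∈ O r} (R x))
    (hRmeas : Measurable R)
    (N : ℝ → ℝ)
    (hN : ∀ r ∈ Icc (0:ℝ) 1, IsLeast {r' | r' ∈ Rset ∧ r ≤ r'} (N r))
    (hNmeas : Measurable N)
    (f : ℝ → ℝ) (hf : Measurable f)
    (hcase : (∀ r ∈ Icc (0:ℝ) 1, 0 ≤ f r) ∨ Integrable (fun x => f (R x)) P) :
    ∫ r in Icc (0:ℝ) 1, f (N r) = ∫ x, f (R x) ∂P := by
  have hmapeq : Measure.map N (volume.restrict (Icc (0:ℝ) 1)) = Measure.map R P := by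
    refine Measure.ext_of_Iic _ _ (fun q => ?_)
    rw [Measure.map_apply hNmeas measurableSet_Iic,
        Measure.map_apply hRmeas measurableSet_Iic,
        Measure.restrict_apply (hNmeas measurableSet_Iic)]
    by_cases hq : 0 ≤ q
    · set S := Rset ∩ Iic q with hS
      have hSne : S.Nonempty := ⟨0, h0, hq⟩
      have hSbdd : BddAbove S := ⟨q, fun r hr => hr.2⟩
      have hSclosed : IsClosed S := hRclosed.inter isClosed_Iic
      have hq'S : sSup S ∈ S := hSclosed.csSup_mem hSne hSbdd
      set q' := sSup S with hq'
      have hq'R : q' ∈ Rset := hq'S.1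
      have hq'le : q' ≤ q := hq'S.2
      have hq'0 : 0 ≤ q' := (hRsub hq'R).1
      have hq'1 : q' ≤ 1 := (hRsub hq'R).2
      have hiff : ∀ r ∈ Rset, (r ≤ q ↔ r ≤ q') := fun r hr =>
        ⟨fun h => le_csSup hSbdd ⟨hr, h⟩, fun h => h.trans hq'le⟩
      have hRset' : R ⁻¹' Iic q = O q' := by
        ext x
        simp only [mem_preimage, mem_Iic]
        constructor
        · intro h
          exact hOmono _ (hR x).1.1 _ hq'R ((hiff _ (hR x).1.1).1 h) (hR x).1.2
        · intro h
          exact ((hR x).2 ⟨hq'R, h⟩).trans hq'le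
      have hNset : N ⁻¹' Iic q ∩ Icc (0:ℝ) 1 = Icc 0 q' := by
        ext s
        simp only [mem_inter_iff, mem_preimage, mem_Iic, mem_Icc]
        constructor
        · rintro ⟨hNs, hs0, hs1⟩
          have hNls := hN s ⟨hs0, hs1⟩
          exact ⟨hs0, hNls.1.2.trans ((hiff _ hNls.1.1).1 hNs)⟩
        · rintro ⟨hs0, hsq'⟩
          have hsI : s ∈ Icc (0:ℝ) 1 := ⟨hs0, hsq'.trans hq'1⟩
          exact ⟨((hN s hsI).2 ⟨hq'R, hsq'⟩).trans hq'le, hsI⟩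
      rw [hNset, hRset', hOP _ hq'R, Real.volume_Icc]; simp
    · push_neg at hq
      have hRset' : R ⁻¹' Iic q = ∅ := by
        ext x
        simp only [mem_preimage, mem_Iic, mem_empty_iff_false, iff_false, not_le]
        exact lt_of_lt_of_le hq (hRsub (hR x).1.1).1
      have hNset : N ⁻¹' Iic q ∩ Icc (0:ℝ) 1 = ∅ := by
        ext s
        simp only [mem_inter_iff, mem_preimage, mem_Iic, mem_empty_iff_false, iff_false,
          not_and]
        intro hNs hsI
        exact absurd (hNs.trans_lt hq) (not_lt.2 (hRsub (hN s hsI).1.1).1)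
      rw [hNset, hRset']; simp
  have h1 : ∫ r in Icc (0:ℝ) 1, f (N r)
      = ∫ y, f y ∂(Measure.map N (volume.restrict (Icc (0:ℝ) 1))) :=
    (integral_map hNmeas.aemeasurable hf.aestronglyMeasurable).symm
  have h2 : ∫ y, f y ∂(Measure.map R P) = ∫ x, f (R x) ∂P :=
    integral_map hRmeas.aemeasurable hf.aestronglyMeasurable
  rw [h1, hmapeq, h2]
end

section
/- For r ∈ ℛ, the singleton {r} has positive mass under the pushforward of P by R if and only if r > 0 and r is isolated from below in ℛ; that is, P({x ∈ X : R(x) = r}) > 0 if and only if r > 0 and there exists ε > 0 with (r − ε, r) ∩ ℛ = ∅. (Remark on the measure of singletons, Appendix A.1.2) -/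
open MeasureTheory Set

/-- Remark of Appendix A.1.2: for `r ∈ ℛ`, the singleton `{r}` has positive mass under
the pushforward of `P` by `R` iff `r > 0` and `r` is isolated from below in `ℛ`. -/
theorem singleton_pos_mass_iff
    {X : Type*} [MeasurableSpace X] (P : Measure X) [IsProbabilityMeasure P]
    (Rset : Set ℝ) (hRclosed : IsClosed Rset) (hRsub : Rset ⊆ Icc (0:ℝ) 1)
    (h0 : (0:ℝ) ∈ Rset) (h1 : (1:ℝ) ∈ Rset)
    (O : ℝ → Set X)
    (hOmeas : ∀ r ∈ Rset, MeasurableSet (O r))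
    (hOmono : ∀ r₁ ∈ Rset, ∀ r₂ ∈ Rset, r₁ ≤ r₂ → O r₁ ⊆ O r₂)
    (hOP : ∀ r ∈ Rset, P (O r) = ENNReal.ofReal r)
    (R : X → ℝ)
    (hR : ∀ x : X, IsLeast {r | r ∈ Rset ∧ x ∈ O r} (R x)) :
    ∀ r ∈ Rset,
      (0 < P {x : X | R x = r} ↔ 0 < r ∧ ∃ ε > 0, Ioo (r - ε) r ∩ Rset = ∅) := by
  intro r hr
  have hr0 : (0:ℝ) ≤ r := (hRsub hr).1
  constructor
  · intro hpos
    have hSO : {x : X | R x = r} ⊆ O r := by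
      intro x hx
      have := (hR x).1.2
      rwa [show R x = r from hx] at this
    have hrpos : 0 < r := by
      rcases lt_or_eq_of_le hr0 with h | h
      · exact h
      · exfalso
        have hle : P {x : X | R x = r} ≤ ENNReal.ofReal r :=
          (measure_mono hSO).trans_eq (hOP r hr)
        have hz : ENNReal.ofReal r = 0 := by rw [← h]; simp
        rw [hz] at hle
        exact hpos.ne' (le_antisymm hle bot_le)
    refine ⟨hrpos, ?_⟩
    by_contra hc
    push_neg at hc
    set S := {x : X | R x = r} with hS
    have hne : P S ≠ ⊤ := measure_ne_top P S
    have hεpos : 0 < (P S).toReal / 2 := by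
      have := ENNReal.toReal_pos hpos.ne' hne
      linarith
    obtain ⟨r', hr'⟩ := hc _ hεpos
    have hr'R : r' ∈ Rset := hr'.2
    have hr'lt : r' < r := hr'.1.2
    have hr'gt : r - (P S).toReal / 2 < r' := hr'.1.1
    have hsub : S ⊆ O r \ O r' := by
      intro x hx
      have hx' : R x = r := hx
      refine ⟨?_, ?_⟩
      · have := (hR x).1.2; rwa [hx'] at this
      · intro hmem
        have hle : R x ≤ r' := (hR x).2 ⟨hr'R, hmem⟩
        rw [hx'] at hle
        exact absurd hle (not_le.2 hr'lt)
    have hdiff : P (O r \ O r') = ENNReal.ofReal r - ENNReal.ofReal r' := by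
      rw [measure_diff (hOmono r' hr'R r hr hr'lt.le)
        (hOmeas r' hr'R).nullMeasurableSet (measure_ne_top P _),
        hOP r hr, hOP r' hr'R]
    have h1 : P S ≤ ENNReal.ofReal (r - r') := by
      calc P S ≤ P (O r \ O r') := measure_mono hsub
        _ = ENNReal.ofReal r - ENNReal.ofReal r' := hdiff
        _ = ENNReal.ofReal (r - r') := (ENNReal.ofReal_sub r (hRsub hr'R).1).symm
    have h2 : ENNReal.ofReal (r - r') < P S := by
      calc ENNReal.ofReal (r - r') ≤ ENNReal.ofReal ((P S).toReal / 2) :=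
            ENNReal.ofReal_le_ofReal (by linarith)
        _ = P S / 2 := by
            rw [ENNReal.ofReal_div_of_pos (by norm_num), ENNReal.ofReal_toReal hne]
            norm_num
        _ < P S := ENNReal.half_lt_self hpos.ne' hne
    exact lt_irrefl _ (h1.trans_lt h2)
  · rintro ⟨hrpos, ε, hεpos, hempty⟩
    have hTne : (Rset ∩ Iio r).Nonempty := ⟨0, h0, hrpos⟩
    have hTbdd : BddAbove (Rset ∩ Iio r) := ⟨r, fun t ht => ht.2.le⟩
    set s := sSup (Rset ∩ Iio r) with hs
    have hsR : s ∈ Rset := by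
      have h₁ : s ∈ closure (Rset ∩ Iio r) := csSup_mem_closure hTne hTbdd
      have h₂ : closure (Rset ∩ Iio r) ⊆ Rset :=
        (closure_mono inter_subset_left).trans hRclosed.closure_eq.subset
      exact h₂ h₁
    have hslt : s < r := by
      have : s ≤ r - ε := by
        apply csSup_le hTne
        intro t ht
        by_contra hts
        push_neg at hts
        have : t ∈ Ioo (r - ε) r ∩ Rset := ⟨⟨hts, ht.2⟩, ht.1⟩
        rw [hempty] at this
        exact this
      linarith
    have hsub : O r \ O s ⊆ {x : X | R x = r} := by
      rintro x ⟨hxr, hxs⟩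
      have hle : R x ≤ r := (hR x).2 ⟨hr, hxr⟩
      have hRmem := (hR x).1
      rcases eq_or_lt_of_le hle with h | h
      · exact h
      · exfalso
        have hRs : R x ≤ s := le_csSup hTbdd ⟨hRmem.1, h⟩
        exact hxs (hOmono _ hRmem.1 s hsR hRs hRmem.2)
    have hdiff : P (O r \ O s) = ENNReal.ofReal r - ENNReal.ofReal s := by
      rw [measure_diff (hOmono s hsR r hr hslt.le)
        (hOmeas s hsR).nullMeasurableSet (measure_ne_top P _),
        hOP r hr, hOP s hsR]
    have hposdiff : 0 < P (O r \ O s) := by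
      rw [hdiff]
      rw [tsub_pos_iff_lt]
      exact (ENNReal.ofReal_lt_ofReal_iff hrpos).2 hslt
    exact hposdiff.trans_le (measure_mono hsub)
end

section
/- For every Borel measurable f : [0,1] → ℝ with f ∘ R P-integrable and every r ∈ ℛ, the partial integral of f ∘ N satisfies ∫_{[0,r]} f(N(r')) dλ(r') = ∫_X f(R(x))·1{R(x) ≤ r} dP(x). (Application of Theorem A.2, Appendix A.1.3) -/
open MeasureTheory Set

/-- Application of Theorem A.2 (Appendix A.1.3): for every `r ∈ ℛ`,
`∫_{[0,r]} f(N(r')) dλ(r') = ∫_X f(R(x))·1{R(x) ≤ r} dP(x)`. -/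
theorem partial_integral_transformation
    {X : Type*} [MeasurableSpace X] (P : Measure X) [IsProbabilityMeasure P]
    (Rset : Set ℝ) (hRclosed : IsClosed Rset) (hRsub : Rset ⊆ Icc (0:ℝ) 1)
    (h0 : (0:ℝ) ∈ Rset) (h1 : (1:ℝ) ∈ Rset)
    (O : ℝ → Set X)
    (hOmeas : ∀ r ∈ Rset, MeasurableSet (O r))
    (hOmono : ∀ r₁ ∈ Rset, ∀ r₂ ∈ Rset, r₁ ≤ r₂ → O r₁ ⊆ O r₂)
    (hOP : ∀ r ∈ Rset, P (O r) = ENNReal.ofReal r)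
    (R : X → ℝ)
    (hR : ∀ x : X, IsLeast {r | r ∈ Rset ∧ x ∈ O r} (R x))
    (hRmeas : Measurable R)
    (N : ℝ → ℝ)
    (hN : ∀ r ∈ Icc (0:ℝ) 1, IsLeast {r' | r' ∈ Rset ∧ r ≤ r'} (N r))
    (hNmeas : Measurable N)
    (f : ℝ → ℝ) (hf : Measurable f)
    (hint : Integrable (fun x => f (R x)) P) :
    ∀ r ∈ Rset,
      ∫ r' in Icc (0:ℝ) r, f (N r') =
        ∫ x, Set.indicator {x' : X | R x' ≤ r} (fun x' => f (R x')) x ∂P := by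
  intro r hr
  have hr01 : r ∈ Icc (0:ℝ) 1 := hRsub hr
  have hRmem : ∀ x, R x ∈ Rset := fun x => (hR x).1.1
  have hNmem : ∀ r' ∈ Icc (0:ℝ) 1, N r' ∈ Rset := fun r' h => (hN r' h).1.1
  have hNle : ∀ r' ∈ Icc (0:ℝ) 1, r' ≤ N r' := fun r' h => (hN r' h).1.2
  have lemA : ∀ s ∈ Rset, R ⁻¹' Iic s = O s := by
    intro s hs
    ext x
    simp only [mem_preimage, mem_Iic]
    constructor
    · intro h
      exact hOmono _ (hRmem x) _ hs h ((hR x).1.2)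
    · intro h
      exact (hR x).2 ⟨hs, h⟩
  have lemB : ∀ s ∈ Rset, ∀ r' ∈ Icc (0:ℝ) 1, (N r' ≤ s ↔ r' ≤ s) := by
    intro s hs r' h
    constructor
    · intro hle; exact le_trans (hNle r' h) hle
    · intro hle; exact (hN r' h).2 ⟨hs, hle⟩
  set μ1 : Measure ℝ := (volume.restrict (Icc (0:ℝ) 1)).map N with hμ1
  set μ2 : Measure ℝ := P.map R with hμ2
  haveI : IsFiniteMeasure (volume.restrict (Icc (0:ℝ) 1)) :=
    ⟨by rw [Measure.restrict_apply_univ]; simp [Real.volume_Icc]⟩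
  haveI : IsFiniteMeasure μ1 := by
    rw [hμ1]; infer_instance
  haveI : IsProbabilityMeasure μ2 := by
    rw [hμ2]; exact Measure.isProbabilityMeasure_map hRmeas.aemeasurable
  have hμeq : μ1 = μ2 := by
    refine Measure.ext_of_Iic μ1 μ2 (fun a => ?_)
    rw [hμ1, hμ2, Measure.map_apply hNmeas measurableSet_Iic,
      Measure.map_apply hRmeas measurableSet_Iic,
      Measure.restrict_apply (hNmeas measurableSet_Iic)]
    by_cases ha : a < 0
    · have h1' : N ⁻¹' Iic a ∩ Icc 0 1 = (∅ : Set ℝ) := by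
        ext x
        simp only [mem_inter_iff, mem_preimage, mem_Iic, mem_Icc, mem_empty_iff_false,
          iff_false, not_and]
        intro hNx hx0 hx1
        have := (hRsub (hNmem x ⟨hx0, hx1⟩)).1
        linarith
      have h2' : R ⁻¹' Iic a = (∅ : Set X) := by
        ext x
        simp only [mem_preimage, mem_Iic, mem_empty_iff_false, iff_false, not_le]
        have := (hRsub (hRmem x)).1
        linarith
      rw [h1', h2']; simp
    · push_neg at ha
      set s := sSup (Rset ∩ Iic a) with hsdef
      have hne : (Rset ∩ Iic a).Nonempty := ⟨0, h0, by simpa using ha⟩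
      have hbdd : BddAbove (Rset ∩ Iic a) := ⟨1, fun t ht => (hRsub ht.1).2⟩
      have hclosed : IsClosed (Rset ∩ Iic a) := hRclosed.inter isClosed_Iic
      have hsmem := hclosed.csSup_mem hne hbdd
      have hsR : s ∈ Rset := hsmem.1
      have hsa : s ≤ a := hsmem.2
      have hs01 := hRsub hsR
      have hRa : R ⁻¹' Iic a = O s := by
        rw [← lemA s hsR]
        ext x
        simp only [mem_preimage, mem_Iic]
        constructor
        · intro h; exact le_csSup hbdd ⟨hRmem x, h⟩
        · intro h; exact h.trans hsa
      have hNa : N ⁻¹' Iic a ∩ Icc 0 1 = Icc 0 s := by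
        ext x
        simp only [mem_inter_iff, mem_preimage, mem_Iic, mem_Icc]
        constructor
        · rintro ⟨hNx, hx0, hx1⟩
          exact ⟨hx0, (lemB s hsR x ⟨hx0, hx1⟩).1
            (le_csSup hbdd ⟨hNmem x ⟨hx0, hx1⟩, hNx⟩)⟩
        · rintro ⟨hx0, hxs⟩
          have hx1 : x ≤ 1 := hxs.trans hs01.2
          exact ⟨((lemB s hsR x ⟨hx0, hx1⟩).2 hxs).trans hsa, hx0, hx1⟩
      rw [hRa, hNa, hOP s hsR, Real.volume_Icc]
      simp
  have hgmeas : Measurable ((Iic r).indicator f) := hf.indicator measurableSet_Iic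
  have hRHS : (fun x => Set.indicator {x' : X | R x' ≤ r} (fun x' => f (R x')) x) =
      fun x => (Iic r).indicator f (R x) := by
    funext x
    by_cases h : R x ≤ r <;> simp [Set.indicator_apply, h]
  have step1 : ∫ r' in Icc (0:ℝ) 1, (Iic r).indicator f (N r') =
      ∫ r' in Icc (0:ℝ) 1, (Iic r).indicator (fun y => f (N y)) r' := by
    refine setIntegral_congr_fun measurableSet_Icc (fun x hx => ?_)
    by_cases h : x ≤ r
    · have hNx : N x ≤ r := (lemB r hr x hx).2 h
      simp [Set.indicator_apply, h, hNx]
    · have hNx : ¬ N x ≤ r := fun hc => h ((lemB r hr x hx).1 hc)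
      simp [Set.indicator_apply, h, hNx]
  have step2 : ∫ r' in Icc (0:ℝ) 1, (Iic r).indicator (fun y => f (N y)) r' =
      ∫ r' in Icc (0:ℝ) r, f (N r') := by
    have hset : Icc (0:ℝ) 1 ∩ Iic r = Icc 0 r := by
      ext x
      simp only [mem_inter_iff, mem_Iic, mem_Icc]
      constructor
      · rintro ⟨⟨h1', _⟩, h2'⟩; exact ⟨h1', h2'⟩
      · rintro ⟨h1', h2'⟩; exact ⟨⟨h1', h2'.trans hr01.2⟩, h2'⟩
    rw [setIntegral_indicator measurableSet_Iic, hset]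
  calc ∫ r' in Icc (0:ℝ) r, f (N r')
      = ∫ r' in Icc (0:ℝ) 1, (Iic r).indicator f (N r') := by rw [step1, step2]
    _ = ∫ t, (Iic r).indicator f t ∂μ1 :=
        (integral_map hNmeas.aemeasurable hgmeas.aestronglyMeasurable).symm
    _ = ∫ t, (Iic r).indicator f t ∂μ2 := by rw [hμeq]
    _ = ∫ x, (Iic r).indicator f (R x) ∂P :=
        integral_map hRmeas.aemeasurable hgmeas.aestronglyMeasurable
    _ = ∫ x, Set.indicator {x' : X | R x' ≤ r} (fun x' => f (R x')) x ∂P := by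
        rw [hRHS]
end

section
/- The function T is antitone, and for every x ∈ X the set {x' ∈ X : T(U(x')) ≤ T(U(x))} has P-measure exactly T(U(x)); equivalently, the family O(r) := {x ∈ X : T(U(x)) ≤ r} indexed by r ∈ ℛ is monotone in r and satisfies P(O(r)) = r for every r ∈ ℛ. (Lemma of Section A.2.2, constraints (1) and (2)) -/
open MeasureTheory Set

/-- Section A.2.2: `T` is antitone and the family `O(r) = {x : T(U(x)) ≤ r}` is monotone
in `r` with `P(O(r)) = r` for every `r` in the image `ℛ` of `T`. -/
theorem T_antitone_and_O_family
    {X : Type*} [MeasurableSpace X] (P : Measure X) [IsProbabilityMeasure P]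
    (U : X → ℝ) (hU : Measurable U) (hUbdd : ∃ C : ℝ, ∀ x, |U x| ≤ C)
    (T : ℝ → ℝ) (hT : ∀ u : ℝ, T u = (P {x : X | u ≤ U x}).toReal) :
    Antitone T ∧
    (∀ x : X, P {x' : X | T (U x') ≤ T (U x)} = ENNReal.ofReal (T (U x))) ∧
    (∀ r₁ ∈ Set.range T, ∀ r₂ ∈ Set.range T, r₁ ≤ r₂ →
      {x : X | T (U x) ≤ r₁} ⊆ {x : X | T (U x) ≤ r₂}) ∧
    (∀ r ∈ Set.range T, P {x : X | T (U x) ≤ r} = ENNReal.ofReal r) := by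
  obtain ⟨C, hC⟩ := hUbdd
  have hfin : ∀ u : ℝ, P {x : X | u ≤ U x} ≠ ⊤ := fun u => measure_ne_top P _
  have hPT : ∀ v : ℝ, ENNReal.ofReal (T v) = P {x : X | v ≤ U x} := fun v => by
    rw [hT v, ENNReal.ofReal_toReal (hfin v)]
  have hanti : Antitone T := fun a b hab => by
    rw [hT a, hT b]
    exact ENNReal.toReal_mono (hfin a) (measure_mono fun x hx => le_trans hab hx)
  have hT1 : ∀ v : ℝ, T v ≤ 1 := fun v => by
    rw [hT v]
    exact ENNReal.toReal_le_of_le_ofReal one_pos.le (by simpa using prob_le_one)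
  have key : ∀ u : ℝ, P {x' : X | T (U x') ≤ T u} = ENNReal.ofReal (T u) := by
    intro u
    by_cases h1 : T u = 1
    · have hB : {x' : X | T (U x') ≤ T u} = univ :=
        eq_univ_of_forall fun x => by simpa [h1] using hT1 (U x)
      rw [hB, h1, measure_univ]
      simp
    · set S := {v : ℝ | T v ≤ T u} with hS
      have hup : ∀ v ∈ S, ∀ w, v ≤ w → w ∈ S := fun v hv w hvw =>
        le_trans (hanti hvw) hv
      have huS : u ∈ S := le_refl (T u)
      have hne : S.Nonempty := ⟨u, huS⟩
      have hbdd : BddBelow S := by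
        refine ⟨-C, fun v hv => ?_⟩
        by_contra hlt
        push_neg at hlt
        have hTv : T v = 1 := by
          rw [hT v]
          have huniv : {x : X | v ≤ U x} = univ := eq_univ_of_forall fun x =>
            le_trans hlt.le (neg_le_of_abs_le (hC x))
          rw [huniv, measure_univ]
          simp
        exact h1 (le_antisymm (hT1 u) (hTv ▸ hv))
      set s := sInf S with hs
      have hsle : ∀ v ∈ S, s ≤ v := fun v hv => csInf_le hbdd hv
      have hIoi : Ioi s ⊆ S := by
        intro v hv
        obtain ⟨w, hwS, hwv⟩ := exists_lt_of_csInf_lt hne hv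
        exact hup w hwS v hwv.le
      by_cases hsS : s ∈ S
      · have hSeq : S = Ici s := by
          ext v
          exact ⟨fun hv => hsle v hv, fun hv => hup s hsS v hv⟩
        have hB : {x' : X | T (U x') ≤ T u} = {x : X | s ≤ U x} := by
          ext x
          constructor
          · intro hx; exact hsle _ hx
          · intro hx; exact hup s hsS _ hx
        have hTs : T s = T u := le_antisymm hsS (hanti (hsle u huS))
        rw [hB, ← hPT s, hTs]
      · have hSeq : S = Ioi s := by
          ext v
          refine ⟨fun hv => lt_of_le_of_ne (hsle v hv) fun h => hsS (h ▸ hv), fun hv => hIoi hv⟩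
        have hB : {x' : X | T (U x') ≤ T u} = {x : X | s < U x} := by
          ext x
          constructor
          · intro hx
            have : U x ∈ S := hx
            rw [hSeq] at this; exact this
          · intro hx
            exact hIoi hx
        rw [hB]
        refine le_antisymm ?_ ?_
        · have hcover : {x : X | s < U x} = ⋃ n : ℕ, {x : X | s + 1/(n+1) ≤ U x} := by
            ext x
            simp only [mem_setOf_eq, mem_iUnion]
            constructor
            · intro hx
              obtain ⟨n, hn⟩ := exists_nat_one_div_lt (sub_pos.mpr hx)
              exact ⟨n, by linarith⟩
            · rintro ⟨n, hn⟩
              have : (0:ℝ) < 1/(n+1) := by positivity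
              linarith
          rw [hcover]
          have hdir : Directed (· ⊆ ·) (fun n : ℕ => {x : X | s + 1/(n+1) ≤ U x}) := by
            intro m n
            rcases le_total m n with h | h
            · refine ⟨n, fun x hx => ?_, fun x hx => hx⟩
              simp only [mem_setOf_eq] at hx ⊢
              have : (1:ℝ)/(n+1) ≤ 1/(m+1) := by
                apply one_div_le_one_div_of_le (by positivity)
                have hmn : (m:ℝ) ≤ n := Nat.cast_le.mpr h
                linarith
              linarith
            · refine ⟨m, fun x hx => hx, fun x hx => ?_⟩
              simp only [mem_setOf_eq] at hx ⊢
              have : (1:ℝ)/(m+1) ≤ 1/(n+1) := by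
                apply one_div_le_one_div_of_le (by positivity)
                have hmn : (n:ℝ) ≤ m := Nat.cast_le.mpr h
                linarith
              linarith
          rw [hdir.measure_iUnion]
          refine iSup_le fun n => ?_
          have hmem : s + 1/(n+1) ∈ S := hIoi (by
            have : (0:ℝ) < 1/(n+1) := by positivity
            simpa using lt_add_of_pos_right s this)
          calc P {x : X | s + 1/(n+1) ≤ U x} = ENNReal.ofReal (T (s + 1/(n+1))) :=
                (hPT _).symm
            _ ≤ ENNReal.ofReal (T u) := ENNReal.ofReal_le_ofReal hmem
        · rw [hPT u]
          refine measure_mono fun x hx => ?_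
          have hsu : s < u := by rw [hSeq] at huS; exact huS
          exact lt_of_lt_of_le hsu hx
  refine ⟨hanti, fun x => key (U x), fun r₁ _ r₂ _ h12 x hx => le_trans hx h12, ?_⟩
  rintro r ⟨u, rfl⟩
  exact key u
end

section
/- For every r ∈ [0,1], the threshold function satisfies ξ(r) = ξ(N(r)). (Theorem A.4) -/
open MeasureTheory Set

/-- Theorem A.4: for every `r ∈ [0,1]`, the threshold function satisfies
`ξ(r) = ξ(N(r))`. -/
theorem xi_eq_xi_N
    {X : Type*} [MeasurableSpace X] [Nonempty X]
    (P : Measure X) [IsProbabilityMeasure P]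
    (U : X → ℝ) (hU : Measurable U) (hUbdd : ∃ C : ℝ, ∀ x, |U x| ≤ C)
    (T : ℝ → ℝ) (hT : ∀ u : ℝ, T u = (P {x : X | u ≤ U x}).toReal)
    (m Msup M : ℝ)
    (hm : IsGLB (Set.range U) m) (hMsup : IsLUB (Set.range U) Msup) (hM : Msup < M)
    (ξ : ℝ → ℝ)
    (hξ : ∀ r : ℝ, ξ r = sInf {u | u ∈ Icc m M ∧ T u ≤ r})
    (N : ℝ → ℝ)
    (hN : ∀ r ∈ Icc (0:ℝ) 1, IsLeast {r' | r' ∈ Set.range T ∧ r ≤ r'} (N r))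
    (hpos : ∀ u₁ u₂ : ℝ, m ≤ u₁ → u₁ < u₂ → u₂ ≤ Msup →
      0 < P {x : X | u₁ ≤ U x ∧ U x < u₂}) :
    ∀ r ∈ Icc (0:ℝ) 1, ξ r = ξ (N r) := by
  intro r hr
  obtain ⟨⟨⟨uN, huN⟩, hrN⟩, hNleast⟩ := hN r hr
  obtain ⟨x0⟩ := (inferInstance : Nonempty X)
  have hr0 : (0:ℝ) ≤ r := hr.1
  have hUle : ∀ x, U x ≤ Msup := fun x => hMsup.1 ⟨x, rfl⟩
  have hmle : ∀ x, m ≤ U x := fun x => hm.1 ⟨x, rfl⟩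
  have hmMsup : m ≤ Msup := (hmle x0).trans (hUle x0)
  have hmM : m ≤ M := hmMsup.trans hM.le
  -- T v = 0 for Msup < v
  have hT0 : ∀ v, Msup < v → T v = 0 := by
    intro v hv
    rw [hT]
    have he : {x : X | v ≤ U x} = ∅ := by
      ext x
      simp only [Set.mem_setOf_eq, Set.mem_empty_iff_false, iff_false, not_le]
      linarith [hUle x]
    simp [he]
  -- strict decrease of T on [m, Msup]
  have hTstrict : ∀ u v : ℝ, m ≤ u → u < v → v ≤ Msup → T v < T u := by
    intro u v hmu huv hvM
    have hmeas1 : MeasurableSet {x : X | u ≤ U x ∧ U x < v} :=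
      (measurableSet_le measurable_const hU).inter (measurableSet_lt hU measurable_const)
    have hmeas2 : MeasurableSet {x : X | v ≤ U x} := measurableSet_le measurable_const hU
    have hsplit : P {x : X | u ≤ U x}
        = P {x : X | u ≤ U x ∧ U x < v} + P {x : X | v ≤ U x} := by
      rw [← measure_union _ hmeas2]
      · congr 1
        ext x
        simp only [Set.mem_union, Set.mem_setOf_eq]
        constructor
        · intro h
          by_cases hx : U x < v
          · exact Or.inl ⟨h, hx⟩
          · exact Or.inr (le_of_not_gt hx)
        · rintro (⟨h1, _⟩ | h) <;> [exact h1; linarith]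
      · exact fun s hs1 hs2 x hx => absurd ((hs2 hx)) (not_le.mpr (hs1 hx).2)
    have h1 : P {x : X | u ≤ U x ∧ U x < v} ≠ ⊤ := measure_ne_top P _
    have h2 : P {x : X | v ≤ U x} ≠ ⊤ := measure_ne_top P _
    have hposR : 0 < (P {x : X | u ≤ U x ∧ U x < v}).toReal :=
      ENNReal.toReal_pos (hpos u v hmu huv hvM).ne' h1
    rw [hT u, hT v, hsplit, ENNReal.toReal_add h1 h2]
    linarith
  set A : ℝ → Set ℝ := fun r' => {u | u ∈ Icc m M ∧ T u ≤ r'} with hA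
  have hMmem : ∀ r', 0 ≤ r' → M ∈ A r' := by
    intro r' hr'
    exact ⟨⟨hmM, le_refl M⟩, by rw [hT0 M hM]; exact hr'⟩
  have hbdd : ∀ r', BddBelow (A r') := fun r' => ⟨m, fun u hu => hu.1.1⟩
  have h0N : (0:ℝ) ≤ N r := hr0.trans hrN
  have hne : ∀ r', 0 ≤ r' → (A r').Nonempty := fun r' h => ⟨M, hMmem r' h⟩
  rw [hξ r, hξ (N r)]
  apply le_antisymm
  · -- sInf (A r) ≤ sInf (A (N r))
    apply le_csInf (hne (N r) h0N)
    intro u hu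
    by_contra hcon
    push_neg at hcon
    set b := sInf (A r) with hb
    have hbleM : b ≤ M := csInf_le (hbdd r) (hMmem r hr0)
    have humem : m ≤ u ∧ u ≤ M := hu.1
    have hunotin : u ∉ A r := fun h => absurd (csInf_le (hbdd r) h) (not_le.mpr hcon)
    have htur : r < T u := by
      by_contra h
      exact hunotin ⟨humem, le_of_not_gt h⟩
    have hTuN : T u = N r := le_antisymm hu.2 (hNleast ⟨⟨u, rfl⟩, htur.le⟩)
    have huMsup : u ≤ Msup := by
      by_contra h
      push_neg at h
      rw [hT0 u h] at htur
      linarith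
    rcases lt_or_eq_of_le huMsup with hult | hueq
    · -- u < Msup : pick v = min ((u+b)/2) Msup
      set v := min ((u + b) / 2) Msup with hv
      have huv : u < v := lt_min (by linarith) hult
      have hvMsup : v ≤ Msup := min_le_right _ _
      have hvb : v < b := lt_of_le_of_lt (min_le_left _ _) (by linarith)
      have hTv : T v < N r := hTuN ▸ hTstrict u v humem.1 huv hvMsup
      have hTvr : T v ≤ r := by
        by_contra h
        push_neg at h
        exact absurd (hNleast ⟨⟨v, rfl⟩, h.le⟩) (not_le.mpr hTv)
      have hvA : v ∈ A r := ⟨⟨humem.1.trans huv.le, hvb.le.trans hbleM⟩, hTvr⟩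
      exact absurd (csInf_le (hbdd r) hvA) (not_le.mpr hvb)
    · -- u = Msup : pick v = (Msup + b)/2
      have hub : Msup < b := hueq ▸ hcon
      set v := (Msup + b) / 2 with hv
      have h1 : Msup < v := by simp only [hv]; linarith
      have h2 : v < b := by simp only [hv]; linarith
      have hvA : v ∈ A r := ⟨⟨hmMsup.trans h1.le, h2.le.trans hbleM⟩,
        by rw [hT0 v h1]; exact hr0⟩
      exact absurd (csInf_le (hbdd r) hvA) (not_le.mpr h2)
  · -- sInf (A (N r)) ≤ sInf (A r) : since A r ⊆ A (N r)
    apply csInf_le_csInf (hbdd (N r)) (hne r hr0)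
    intro u hu
    exact ⟨hu.1, hu.2.trans hrN⟩
end

section
/- Equivalence of indicator sets: for every x ∈ X, the sets {x' ∈ X : T(U(x')) ≤ T(U(x))} and {x' ∈ X : U(x') ≥ U(x)} differ by a P-null set (their symmetric difference has P-measure zero); moreover, if P({x : u₁ ≤ U(x) < u₂}) > 0 whenever u₁ < u₂ both lie in the smallest closed interval containing the range of U, then the two sets are equal. (Theorem A.6) -/
open MeasureTheory Set
open scoped symmDiff

/-- Theorem A.6 (equivalence of indicator sets): for every `x`, the sets
`{x' : T(U(x'))≤ T(U(x))}` and `{x' : U(x') ≥ U(x)}` differ by a `P`-null set;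
moreover under the positivity (strict decrease) assumption they are equal. -/
theorem indicator_sets_equiv
    {X : Type*} [MeasurableSpace X] [Nonempty X]
    (P : Measure X) [IsProbabilityMeasure P]
    (U : X → ℝ) (hU : Measurable U) (hUbdd : ∃ C : ℝ, ∀ x, |U x| ≤ C)
    (T : ℝ → ℝ) (hT : ∀ u : ℝ, T u = (P {x : X | u ≤ U x}).toReal)
    (m Msup : ℝ)
    (hm : IsGLB (Set.range U) m) (hMsup : IsLUB (Set.range U) Msup) :
    (∀ x : X,
      P ({x' : X | T (U x') ≤ T (U x)} ∆ {x' : X | U x ≤ U x'}) = 0) ∧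
    ((∀ u₁ u₂ : ℝ, m ≤ u₁ → u₁ < u₂ → u₂ ≤ Msup →
        0 < P {x : X | u₁ ≤ U x ∧ U x < u₂}) →
      ∀ x : X, {x' : X | T (U x') ≤ T (U x)} = {x' : X | U x ≤ U x'}) := by
  have hmeasN : ∀ u v : ℝ, MeasurableSet {y : X | u ≤ U y ∧ U y < v} := fun u v =>
    hU measurableSet_Ico
  have hadd : ∀ u' u : ℝ, u' ≤ u →
      P {y : X | u' ≤ U y} = P {y : X | u ≤ U y} + P {y : X | u' ≤ U y ∧ U y < u} := by
    intro u' u hle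
    have hset : {y : X | u' ≤ U y} = {y : X | u ≤ U y} ∪ {y : X | u' ≤ U y ∧ U y < u} := by
      ext y
      simp only [mem_setOf_eq, mem_union]
      constructor
      · intro h
        rcases le_or_gt u (U y) with h' | h'
        · exact Or.inl h'
        · exact Or.inr ⟨h, h'⟩
      · rintro (h | ⟨h, _⟩)
        · exact hle.trans h
        · exact h
    rw [hset, measure_union _ (hmeasN u' u)]
    rw [Set.disjoint_left]
    rintro y (h : u ≤ U y) ⟨_, h2⟩
    exact absurd h (not_le.2 h2)
  have hanti : ∀ u' u : ℝ, u' ≤ u → T u ≤ T u' := by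
    intro u' u hle
    rw [hT, hT]
    exact ENNReal.toReal_mono (measure_ne_top P _)
      (measure_mono fun y (h : u ≤ U y) => hle.trans h)
  have hnull : ∀ u' u : ℝ, u' ≤ u → T u' ≤ T u →
      P {y : X | u' ≤ U y ∧ U y < u} = 0 := by
    intro u' u hle hTle
    have h2 : T u' = T u + (P {y : X | u' ≤ U y ∧ U y < u}).toReal := by
      rw [hT, hT, hadd u' u hle,
        ENNReal.toReal_add (measure_ne_top P _) (measure_ne_top P _)]
    have h3 : (P {y : X | u' ≤ U y ∧ U y < u}).toReal = 0 := by
      have hnn : 0 ≤ (P {y : X | u' ≤ U y ∧ U y < u}).toReal := ENNReal.toReal_nonneg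
      linarith
    exact ((ENNReal.toReal_eq_zero_iff _).1 h3).resolve_right (measure_ne_top P _)
  constructor
  · intro x
    set a := U x with ha
    rw [Set.symmDiff_def]
    apply measure_union_null
    · -- A \ B is null
      have hAB : {x' : X | T (U x') ≤ T a} \ {x' : X | a ≤ U x'} ⊆
          {x' : X | U x' < a ∧ P {y : X | U x' ≤ U y ∧ U y < a} = 0} := by
        rintro x' ⟨h1, h2⟩
        simp only [mem_setOf_eq] at h1 h2 ⊢
        have hlt : U x' < a := not_le.1 h2
        exact ⟨hlt, hnull (U x') a hlt.le h1⟩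
      apply measure_mono_null hAB
      by_cases hlta : P {y : X | U y < a} = 0
      · exact measure_mono_null (fun y hy => hy.1) hlta
      · set S : Set ℝ := {u : ℝ | u < a ∧ P {y : X | u ≤ U y ∧ U y < a} = 0} with hSdef
        have hSup : ∀ u ∈ S, ∀ v : ℝ, u ≤ v → v < a → v ∈ S := by
          intro u hu v huv hva
          refine ⟨hva, measure_mono_null ?_ hu.2⟩
          intro y hy
          simp only [mem_setOf_eq] at hy ⊢
          exact ⟨huv.trans hy.1, hy.2⟩
        have hmlb : ∀ u ∈ S, m < u := by
          intro u hu
          by_contra hcon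
          push_neg at hcon
          apply hlta
          refine measure_mono_null (fun y hy => ?_) hu.2
          exact ⟨hcon.trans (hm.1 (Set.mem_range_self y)), hy⟩
        have hDsub : {x' : X | U x' < a ∧ P {y : X | U x' ≤ U y ∧ U y < a} = 0} ⊆
            U ⁻¹' S := fun x' hx' => ⟨hx'.1, hx'.2⟩
        rcases S.eq_empty_or_nonempty with hS | hS
        · refine measure_mono_null (fun x' hx' => ?_) (measure_empty (μ := P))
          rw [hS] at hDsub
          exact hDsub hx'
        · have hbdd : BddBelow S := ⟨m, fun u hu => (hmlb u hu).le⟩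
          set c := sInf S with hc
          by_cases hcS : c ∈ S
          · refine measure_mono_null (fun x' hx' => ?_) hcS.2
            have hmem : U x' ∈ S := hDsub hx'
            exact ⟨csInf_le hbdd hmem, hmem.1⟩
          · have hcov : {x' : X | U x' < a ∧ P {y : X | U x' ≤ U y ∧ U y < a} = 0} ⊆
                ⋃ q : ℚ, {y : X | c < (q : ℝ) ∧ (q : ℝ) ≤ U y ∧ U y < a} := by
              intro x' hx'
              have hmem : U x' ∈ S := hDsub hx'
              have hcle : c ≤ U x' := csInf_le hbdd hmem
              have hcne : c ≠ U x' := fun h => hcS (h ▸ hmem)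
              obtain ⟨q, hq1, hq2⟩ := exists_rat_btwn (lt_of_le_of_ne hcle hcne)
              exact Set.mem_iUnion.2 ⟨q, hq1, hq2.le, hmem.1⟩
            refine measure_mono_null hcov (measure_iUnion_null fun q => ?_)
            by_cases hq : c < (q : ℝ)
            · by_cases hqa : (q : ℝ) < a
              · obtain ⟨u, huS, hu⟩ := exists_lt_of_csInf_lt hS hq
                have hqS : (q : ℝ) ∈ S := hSup u huS q hu.le hqa
                refine measure_mono_null ?_ hqS.2
                intro y hy
                simp only [mem_setOf_eq] at hy ⊢
                exact ⟨hy.2.1, hy.2.2⟩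
              · refine measure_mono_null (fun y hy => ?_) (measure_empty (μ := P))
                exact absurd (hy.2.2.trans_le (not_lt.1 hqa)) (not_lt.2 hy.2.1)
            · refine measure_mono_null (fun y hy => ?_) (measure_empty (μ := P))
              exact absurd hy.1 hq
    · -- B \ A is empty
      refine measure_mono_null (fun x' hx' => ?_) (measure_empty (μ := P))
      exact absurd (hanti a (U x') hx'.1) hx'.2
  · intro hpos x
    ext x'
    simp only [mem_setOf_eq]
    constructor
    · intro hTle
      by_contra hlt
      push_neg at hlt
      have h0 := hnull (U x') (U x) hlt.le hTle
      have hp := hpos (U x') (U x) (hm.1 (Set.mem_range_self x')) hlt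
        (hMsup.1 (Set.mem_range_self x))
      exact absurd h0 hp.ne'
    · intro h
      exact hanti (U x) (U x') h
end

section
/- The normalized uplift curve is invariant under the rounding map N: for every r ∈ [0,1], V_N(r) = V_N(N(r)), where V_N(r) = ∫_X τ(x)·1{U(x) ≥ ξ(r)} dP(x). (Theorem A.7) -/
open MeasureTheory Set

/-- Theorem A.7: the normalized uplift curve is invariant under the rounding map `N`:
for every `r ∈ [0,1]`, `V_N(r) = V_N(N(r))` where
`V_N(r) = ∫_X τ(x)·1{U(x) ≥ ξ(r)} dP(x)`. -/
theorem VN_eq_VN_N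
    {X : Type*} [MeasurableSpace X] [Nonempty X]
    (P : Measure X) [IsProbabilityMeasure P]
    (U : X → ℝ) (hU : Measurable U) (hUbdd : ∃ C : ℝ, ∀ x, |U x| ≤ C)
    (T : ℝ → ℝ) (hT : ∀ u : ℝ, T u = (P {x : X | u ≤ U x}).toReal)
    (m Msup M : ℝ)
    (hm : IsGLB (Set.range U) m) (hMsup : IsLUB (Set.range U) Msup) (hM : Msup < M)
    (ξ : ℝ → ℝ)
    (hξ : ∀ r : ℝ, ξ r = sInf {u | u ∈ Icc m M ∧ T u ≤ r})
    (N : ℝ → ℝ)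
    (hN : ∀ r ∈ Icc (0:ℝ) 1, IsLeast {r' | r' ∈ Set.range T ∧ r ≤ r'} (N r))
    (τ : X → ℝ) (hτmeas : Measurable τ) (hτint : Integrable τ P)
    (V : ℝ → ℝ)
    (hV : ∀ r : ℝ, V r = ∫ x in {x' : X | ξ r ≤ U x'}, τ x ∂P)
    (hpos : ∀ u₁ u₂ : ℝ, m ≤ u₁ → u₁ < u₂ → u₂ ≤ Msup →
      0 < P {x : X | u₁ ≤ U x ∧ U x < u₂}) :
    ∀ r ∈ Icc (0:ℝ) 1, V r = V (N r) := by
  intro r hr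
  obtain ⟨⟨hNmem, hNge⟩, hNmin⟩ := hN r hr
  have hr0 : (0:ℝ) ≤ r := hr.1
  have hmMsup : m ≤ Msup := by
    obtain ⟨x⟩ := ‹Nonempty X›
    exact le_trans (hm.1 ⟨x, rfl⟩) (hMsup.1 ⟨x, rfl⟩)
  have hmM : m ≤ M := hmMsup.trans hM.le
  -- T vanishes above Msup
  have hT0 : ∀ u : ℝ, Msup < u → T u = 0 := by
    intro u hu
    have : {x : X | u ≤ U x} = ∅ := by
      ext x
      simp only [mem_setOf_eq, mem_empty_iff_false, iff_false, not_le]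
      exact lt_of_le_of_lt (hMsup.1 ⟨x, rfl⟩) hu
    rw [hT, this, measure_empty]
    simp
  -- splitting lemma
  have hsplit : ∀ u u' : ℝ, u < u' →
      T u = T u' + (P {x : X | u ≤ U x ∧ U x < u'}).toReal := by
    intro u u' h
    have hset : {x : X | u ≤ U x} = {x : X | u' ≤ U x} ∪ {x | u ≤ U x ∧ U x < u'} := by
      ext x
      simp only [mem_setOf_eq, mem_union]
      constructor
      · intro hx
        rcases le_or_gt u' (U x) with h' | h'
        · exact Or.inl h'
        · exact Or.inr ⟨hx, h'⟩
      · rintro (h' | ⟨h1, _⟩)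
        · linarith
        · exact h1
    have hdisj : Disjoint {x : X | u' ≤ U x} {x | u ≤ U x ∧ U x < u'} := by
      rw [Set.disjoint_left]
      rintro x hx ⟨_, h2⟩
      exact absurd hx (not_le.mpr h2)
    have hmeas : MeasurableSet {x : X | u ≤ U x ∧ U x < u'} :=
      (measurableSet_le measurable_const hU).inter (measurableSet_lt hU measurable_const)
    rw [hT, hT, hset, measure_union hdisj hmeas,
      ENNReal.toReal_add (measure_ne_top _ _) (measure_ne_top _ _)]
  set A := {u | u ∈ Icc m M ∧ T u ≤ r} with hAdef
  set B := {u | u ∈ Icc m M ∧ T u ≤ N r} with hBdef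
  have hbddA : BddBelow A := ⟨m, fun u hu => hu.1.1⟩
  have hbddB : BddBelow B := ⟨m, fun u hu => hu.1.1⟩
  have hMA : M ∈ A := ⟨⟨hmM, le_refl M⟩, by rw [hT0 M hM]; exact hr0⟩
  have hMB : M ∈ B := ⟨⟨hmM, le_refl M⟩, by rw [hT0 M hM]; exact hr0.trans hNge⟩
  have hAB : A ⊆ B := fun u hu => ⟨hu.1, hu.2.trans hNge⟩
  -- ξ r ≤ Msup
  have hξle : ξ r ≤ Msup := by
    have hsub : Ioc Msup M ⊆ A := by
      intro u hu
      exact ⟨⟨hmMsup.trans hu.1.le, hu.2⟩, by rw [hT0 u hu.1]; exact hr0⟩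
    calc ξ r = sInf A := hξ r
      _ ≤ sInf (Ioc Msup M) := csInf_le_csInf hbddA ⟨M, right_mem_Ioc.mpr hM⟩ hsub
      _ = Msup := csInf_Ioc hM
  -- ξ r is a lower bound of B
  have hlbB : ∀ u ∈ B, ξ r ≤ u := by
    intro u hu
    by_contra hcon
    push_neg at hcon
    set u' := (u + ξ r) / 2 with hu'def
    have h1 : u < u' := by simp only [hu'def]; linarith
    have h2 : u' < ξ r := by simp only [hu'def]; linarith
    have hu'M : u' ∈ Icc m M := ⟨hu.1.1.trans h1.le, le_of_lt (lt_of_lt_of_le h2 (hξle.trans hM.le))⟩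
    have hu'notA : u' ∉ A := by
      have : u' < sInf A := by rw [← hξ r]; exact h2
      exact notMem_of_lt_csInf this hbddA
    have hru' : r < T u' := by
      by_contra h
      push_neg at h
      exact hu'notA ⟨hu'M, h⟩
    have hNle : N r ≤ T u' := hNmin ⟨⟨u', rfl⟩, hru'.le⟩
    have hmid : 0 < P {x : X | u ≤ U x ∧ U x < u'} :=
      hpos u u' hu.1.1 h1 (h2.le.trans hξle)
    have hTlt : T u' < T u := by
      rw [hsplit u u' h1]
      have : 0 < (P {x : X | u ≤ U x ∧ U x < u'}).toReal :=
        ENNReal.toReal_pos hmid.ne' (measure_ne_top _ _)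
      linarith
    exact absurd (lt_of_le_of_lt hNle (hTlt.trans_le hu.2)) (lt_irrefl _)
  -- ξ r = ξ (N r)
  have hξeq : ξ r = ξ (N r) := by
    apply le_antisymm
    · rw [hξ (N r)]
      exact le_csInf ⟨M, hMB⟩ hlbB
    · rw [hξ r, hξ (N r)]
      exact csInf_le_csInf hbddB ⟨M, hMA⟩ hAB
  rw [hV r, hV (N r), hξeq]
end

section
/- For every x ∈ X, the area under the normalized uplift curve evaluated at R(x) = T(U(x)) equals the feature-space double integral: AUNUC(T(U(x))) = ∫_X V_N^X(x')·1{U(x') ≥ U(x)} dP(x'), where AUNUC(p) = ∫_{[0,p]} V_N(r) dλ(r), V_N(r) = ∫_X τ(x')·1{U(x') ≥ ξ(r)} dP(x'), and V_N^X(x') = ∫_X τ(x'')·1{U(x'') ≥ U(x')} dP(x''). (Theorem A.9) -/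
open MeasureTheory Set

lemma swap_aux {α X : Type*} [MeasurableSpace α] [MeasurableSpace X]
    (μ : Measure α) [IsFiniteMeasure μ] (P : Measure X) [IsFiniteMeasure P]
    (τ : X → ℝ) (hτm : Measurable τ) (hτint : Integrable τ P)
    (W : Set (α × X)) (hW : MeasurableSet W) :
    ∫ a, (∫ y in {y | (a, y) ∈ W}, τ y ∂P) ∂μ
      = ∫ y, τ y * (μ {a | (a, y) ∈ W}).toReal ∂P := by
  have hind : ∀ a : α, (∫ y in {y | (a, y) ∈ W}, τ y ∂P)
      = ∫ y, W.indicator (fun _ => (1:ℝ)) (a, y) * τ y ∂P := by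
    intro a
    rw [← integral_indicator (show MeasurableSet {y | (a, y) ∈ W} from measurable_prodMk_left hW)]
    congr 1
    funext y
    by_cases h : (a, y) ∈ W <;> simp [Set.indicator, h]
  have hmeas : Measurable (fun q : α × X => W.indicator (fun _ => (1:ℝ)) q * τ q.2) :=
    (measurable_const.indicator hW).mul (hτm.comp measurable_snd)
  have hτsnd : Integrable (fun q : α × X => τ q.2) (μ.prod P) := by
    have h1 : Integrable τ (Measure.map Prod.snd (μ.prod P)) := by
      rw [Measure.map_snd_prod]
      exact hτint.smul_measure (measure_ne_top μ univ)
    exact h1.comp_measurable measurable_snd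
  have hfint : Integrable (fun q : α × X => W.indicator (fun _ => (1:ℝ)) q * τ q.2) (μ.prod P) := by
    refine hτsnd.norm.mono' hmeas.aestronglyMeasurable ?_
    filter_upwards with q
    by_cases h : q ∈ W <;> simp [Set.indicator, h]
  calc ∫ a, (∫ y in {y | (a, y) ∈ W}, τ y ∂P) ∂μ
      = ∫ a, ∫ y, W.indicator (fun _ => (1:ℝ)) (a, y) * τ y ∂P ∂μ := by simp_rw [hind]
    _ = ∫ y, ∫ a, W.indicator (fun _ => (1:ℝ)) (a, y) * τ y ∂μ ∂P :=
        integral_integral_swap hfint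
    _ = ∫ y, τ y * (μ {a | (a, y) ∈ W}).toReal ∂P := by
        congr 1
        funext y
        have h2 : ∀ a, W.indicator (fun _ => (1:ℝ)) (a, y) * τ y
            = ({a | (a, y) ∈ W}).indicator (fun _ => (1:ℝ)) a * τ y := by
          intro a; by_cases h : (a, y) ∈ W <;> simp [Set.indicator, h]
        simp_rw [h2]
        rw [integral_mul_const,
          integral_indicator_const (1:ℝ) (show MeasurableSet {a | (a, y) ∈ W} from measurable_prodMk_right hW)]
        simp [mul_comm, Measure.real]

/-- Theorem A.9: for every `x`, the area under the normalized uplift curve evaluated at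
`R(x) = T(U(x))` equals the feature-space double integral:
`AUNUC(T(U(x))) = ∫_X V_N^X(x')·1{U(x') ≥ U(x)} dP(x')`. -/
theorem AUNUC_at_R_eq_AUNUCX
    {X : Type*} [MeasurableSpace X] [Nonempty X]
    (P : Measure X) [IsProbabilityMeasure P]
    (U : X → ℝ) (hU : Measurable U) (hUbdd : ∃ C : ℝ, ∀ x, |U x| ≤ C)
    (T : ℝ → ℝ) (hT : ∀ u : ℝ, T u = (P {x : X | u ≤ U x}).toReal)
    (m Msup M : ℝ)
    (hm : IsGLB (Set.range U) m) (hMsup : IsLUB (Set.range U) Msup) (hM : Msup < M)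
    (ξ : ℝ → ℝ)
    (hξ : ∀ r : ℝ, ξ r = sInf {u | u ∈ Icc m M ∧ T u ≤ r})
    (τ : X → ℝ) (hτmeas : Measurable τ) (hτint : Integrable τ P)
    (hpos : ∀ u₁ u₂ : ℝ, m ≤ u₁ → u₁ < u₂ → u₂ ≤ Msup →
      0 < P {x : X | u₁ ≤ U x ∧ U x < u₂}) :
    ∀ x : X,
      ∫ r in Icc (0:ℝ) (T (U x)), (∫ y in {y' : X | ξ r ≤ U y'}, τ y ∂P) =
        ∫ x' in {x'' : X | U x ≤ U x''},
          (∫ y in {y' : X | U x' ≤ U y'}, τ y ∂P) ∂P := by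
  intro x
  -- basic facts
  have hrange : ∀ y : X, m ≤ U y ∧ U y ≤ Msup := fun y => ⟨hm.1 ⟨y, rfl⟩, hMsup.1 ⟨y, rfl⟩⟩
  have hmM : m ≤ Msup := le_trans (hrange (Classical.arbitrary X)).1 (hrange (Classical.arbitrary X)).2
  set g : ℝ → ℝ := fun v => (P {x' | v < U x'}).toReal with hg_def
  have hg_anti : Antitone g := by
    intro v₁ v₂ h12
    exact ENNReal.toReal_mono (measure_ne_top P _)
      (measure_mono (fun x' hx' => lt_of_le_of_lt h12 hx'))
  have hg_meas : Measurable g := hg_anti.measurable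
  have hg_nonneg : ∀ v, 0 ≤ g v := fun v => ENNReal.toReal_nonneg
  -- the key characterization of ξ
  have keyA : ∀ v r : ℝ, m ≤ v → v ≤ Msup → 0 ≤ r → (ξ r ≤ v ↔ g v ≤ r) := by
    intro v r hmv hvM hr0
    set s : Set ℝ := {u | u ∈ Icc m M ∧ T u ≤ r} with hs_def
    have hne : s.Nonempty := by
      refine ⟨(Msup + M) / 2, ⟨⟨by linarith, by linarith⟩, ?_⟩⟩
      have hempty : {x' : X | (Msup + M) / 2 ≤ U x'} = ∅ := by
        ext x'
        simp only [mem_setOf_eq, mem_empty_iff_false, iff_false, not_le]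
        linarith [(hrange x').2]
      rw [hT, hempty]
      simp [hr0]
    have hbdd : BddBelow s := ⟨m, fun u hu => hu.1.1⟩
    constructor
    · intro h
      have hsub : ∀ n : ℕ, (P {x' | v + 1 / ((n : ℝ) + 1) ≤ U x'}).toReal ≤ r := by
        intro n
        have hε : 0 < 1 / ((n : ℝ) + 1) := by positivity
        have hlt : sInf s < v + 1 / ((n : ℝ) + 1) := by
          rw [← hs_def, ← hξ r] at *
          linarith
        obtain ⟨u, hus, hu⟩ := exists_lt_of_csInf_lt hne hlt
        have hmono : (P {x' | v + 1 / ((n : ℝ) + 1) ≤ U x'}) ≤ P {x' | u ≤ U x'} :=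
          measure_mono (fun x' hx' => le_trans (le_of_lt hu) hx')
        calc (P {x' | v + 1 / ((n : ℝ) + 1) ≤ U x'}).toReal
            ≤ (P {x' | u ≤ U x'}).toReal := ENNReal.toReal_mono (measure_ne_top P _) hmono
          _ = T u := (hT u).symm
          _ ≤ r := hus.2
      have hunion : {x' | v < U x'} = ⋃ n : ℕ, {x' | v + 1 / ((n : ℝ) + 1) ≤ U x'} := by
        ext x'
        simp only [mem_setOf_eq, mem_iUnion]
        constructor
        · intro h'
          obtain ⟨n, hn⟩ := exists_nat_one_div_lt (sub_pos.2 h')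
          exact ⟨n, by linarith⟩
        · rintro ⟨n, hn⟩
          have : 0 < 1 / ((n : ℝ) + 1) := by positivity
          linarith
      have hle : P {x' | v < U x'} ≤ ENNReal.ofReal r := by
        rw [hunion]
        have hdir : Directed (· ⊆ ·) (fun n : ℕ => {x' | v + 1 / ((n : ℝ) + 1) ≤ U x'}) := by
          refine Monotone.directed_le ?_
          intro n k hnk x' hx'
          have h1 : (1 : ℝ) / ((k : ℝ) + 1) ≤ 1 / ((n : ℝ) + 1) := by
            apply one_div_le_one_div_of_le (by positivity)
            have : (n : ℝ) ≤ (k : ℝ) := Nat.cast_le.2 hnk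
            linarith
          simp only [mem_setOf_eq] at hx' ⊢
          linarith
        rw [hdir.measure_iUnion]
        refine iSup_le fun n => ?_
        rw [← ENNReal.ofReal_toReal (measure_ne_top P _)]
        exact ENNReal.ofReal_le_ofReal (hsub n)
      calc g v ≤ (ENNReal.ofReal r).toReal :=
            ENNReal.toReal_mono ENNReal.ofReal_ne_top hle
        _ = r := ENNReal.toReal_ofReal hr0
    · intro h
      rw [hξ r, ← hs_def]
      rw [Real.sInf_le_iff hbdd hne]
      intro ε hε
      have hMv : 0 < M - v := by linarith
      set δ : ℝ := min (ε / 2) ((M - v) / 2) with hδ_def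
      have hδpos : 0 < δ := lt_min (by linarith) (by linarith)
      refine ⟨v + δ, ⟨⟨by linarith, ?_⟩, ?_⟩, ?_⟩
      · have : δ ≤ (M - v) / 2 := min_le_right _ _
        linarith
      · rw [hT]
        refine le_trans ?_ h
        refine ENNReal.toReal_mono (measure_ne_top P _) (measure_mono (fun x' hx' => ?_))
        simp only [mem_setOf_eq] at hx' ⊢
        linarith
      · have : δ ≤ ε / 2 := min_le_left _ _
        linarith
  set p : ℝ := T (U x) with hp_def
  have hp : p = (P {x' | U x ≤ U x'}).toReal := hT (U x)
  -- rewrite the LHS inner sets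
  have hLHS1 : (∫ r in Icc (0:ℝ) p, (∫ y in {y' : X | ξ r ≤ U y'}, τ y ∂P))
      = ∫ r in Icc (0:ℝ) p, (∫ y in {y | (r, y) ∈ {q : ℝ × X | g (U q.2) ≤ q.1}}, τ y ∂P) := by
    refine setIntegral_congr_fun measurableSet_Icc (fun r hr => ?_)
    have hset : {y' : X | ξ r ≤ U y'} = {y | (r, y) ∈ {q : ℝ × X | g (U q.2) ≤ q.1}} := by
      ext y
      exact keyA (U y) r (hrange y).1 (hrange y).2 hr.1
    rw [hset]
  have hW₁ : MeasurableSet {q : ℝ × X | g (U q.2) ≤ q.1} :=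
    measurableSet_le (hg_meas.comp (hU.comp measurable_snd)) measurable_fst
  have hW₂ : MeasurableSet {q : X × X | U q.1 ≤ U q.2} :=
    measurableSet_le (hU.comp measurable_fst) (hU.comp measurable_snd)
  have hfin : IsFiniteMeasure (volume.restrict (Icc (0:ℝ) p)) := by
    constructor
    rw [Measure.restrict_apply_univ, Real.volume_Icc]
    exact ENNReal.ofReal_lt_top
  have hLHS2 := swap_aux (volume.restrict (Icc (0:ℝ) p)) P τ hτmeas hτint _ hW₁
  have hRHS2 := swap_aux (P.restrict {x'' : X | U x ≤ U x''}) P τ hτmeas hτint _ hW₂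
  have hRHS2' : (∫ x' in {x'' : X | U x ≤ U x''}, (∫ y in {y' : X | U x' ≤ U y'}, τ y ∂P) ∂P)
      = ∫ y, τ y * ((P.restrict {x'' : X | U x ≤ U x''})
          {a | (a, y) ∈ {q : X × X | U q.1 ≤ U q.2}}).toReal ∂P := hRHS2
  rw [hLHS1, hLHS2, hRHS2']
  -- now both sides are integrals over y; prove pointwise equality
  refine integral_congr_ae (Filter.Eventually.of_forall fun y => ?_)
  dsimp only
  congr 1
  -- compute the Lebesgue side
  have hslice : {r : ℝ | (r, y) ∈ {q : ℝ × X | g (U q.2) ≤ q.1}} = Ici (g (U y)) := rfl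
  have hIcc : Ici (g (U y)) ∩ Icc (0:ℝ) p = Icc (g (U y)) p := by
    ext r
    simp only [mem_inter_iff, mem_Ici, mem_Icc]
    constructor
    · rintro ⟨h1, _, h3⟩; exact ⟨h1, h3⟩
    · rintro ⟨h1, h2⟩; exact ⟨h1, le_trans (hg_nonneg _) h1, h2⟩
  have hvol : ((volume.restrict (Icc (0:ℝ) p)) {r : ℝ | (r, y) ∈ {q : ℝ × X | g (U q.2) ≤ q.1}}).toReal
      = max (p - g (U y)) 0 := by
    rw [hslice, Measure.restrict_apply measurableSet_Ici, hIcc, Real.volume_Icc,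
      ENNReal.toReal_ofReal']
  have hPr : ((P.restrict {x'' : X | U x ≤ U x''}) {x' : X | (x', y) ∈ {q : X × X | U q.1 ≤ U q.2}}).toReal
      = (P ({x' | U x' ≤ U y} ∩ {x'' | U x ≤ U x''})).toReal := by
    have hres := Measure.restrict_apply (μ := P) (s := {x'' : X | U x ≤ U x''})
      (show MeasurableSet {x' : X | U x' ≤ U y} from measurableSet_le hU measurable_const)
    rw [show {x' : X | (x', y) ∈ {q : X × X | U q.1 ≤ U q.2}} = {x' : X | U x' ≤ U y} from rfl,
      hres]
  rw [hvol, hPr]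
  -- the pointwise measure identity
  by_cases h : U x ≤ U y
  · have hunion : {x' : X | U x ≤ U x'}
        = ({x' | U x' ≤ U y} ∩ {x'' | U x ≤ U x''}) ∪ {x' | U y < U x'} := by
      ext x'
      simp only [mem_setOf_eq, mem_union, mem_inter_iff]
      constructor
      · intro hx'
        rcases le_or_gt (U x') (U y) with h' | h'
        · exact Or.inl ⟨h', hx'⟩
        · exact Or.inr h'
      · rintro (⟨_, h2⟩ | h1)
        · exact h2
        · linarith
    have hdisj : Disjoint ({x' : X | U x' ≤ U y} ∩ {x'' | U x ≤ U x''}) {x' : X | U y < U x'} := by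
      rw [Set.disjoint_left]
      rintro x' ⟨h1, _⟩ h2
      simp only [mem_setOf_eq] at h1 h2
      linarith
    have hmeas2 : MeasurableSet {x' : X | U y < U x'} :=
      measurableSet_lt measurable_const hU
    have hadd : P {x' : X | U x ≤ U x'}
        = P ({x' | U x' ≤ U y} ∩ {x'' | U x ≤ U x''}) + P {x' | U y < U x'} := by
      conv_lhs => rw [hunion]
      exact measure_union hdisj hmeas2
    have : p = (P ({x' | U x' ≤ U y} ∩ {x'' | U x ≤ U x''})).toReal + g (U y) := by
      rw [hp, hadd, ENNReal.toReal_add (measure_ne_top P _) (measure_ne_top P _)]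
    rw [this]
    have h0 : 0 ≤ (P ({x' | U x' ≤ U y} ∩ {x'' | U x ≤ U x''})).toReal := ENNReal.toReal_nonneg
    rw [show (P ({x' | U x' ≤ U y} ∩ {x'' | U x ≤ U x''})).toReal + g (U y) - g (U y)
        = (P ({x' | U x' ≤ U y} ∩ {x'' | U x ≤ U x''})).toReal by ring]
    exact max_eq_left h0
  · push_neg at h
    have hempty : {x' : X | U x' ≤ U y} ∩ {x'' : X | U x ≤ U x''} = ∅ := by
      ext x'
      simp only [mem_inter_iff, mem_setOf_eq, mem_empty_iff_false, iff_false, not_and, not_le]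
      intro h1
      linarith
    rw [hempty, measure_empty]
    have hle : p ≤ g (U y) := by
      rw [hp]
      exact ENNReal.toReal_mono (measure_ne_top P _)
        (measure_mono (fun x' hx' => lt_of_lt_of_le h hx'))
    simp only [ENNReal.toReal_zero]
    exact max_eq_right (by linarith)
end

section
/- Variance-minimizing mixture: the function ν ↦ Var((1−ν)Q₁ + ν Q₂) on ℝ attains a unique minimum at ν* = p₁(1−α) + p₀·α = α(1−α)·E[Q₁²]; equivalently, ν* satisfies ν* + P(Y = 1) = p₀ + p₁; in particular, when α = 1/2 the minimizer is ν* = (p₀ + p₁)/2 = P(Y = 1). (Appendix C.5, main result of Section 7.3) -/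
open MeasureTheory Set ProbabilityTheory

/-- Auxiliary: a four-atom simple function built from the joint values of `Y` and `T`. -/
noncomputable def mixF {Ω : Type*} (Y T : Ω → ℝ) (a b c d : ℝ) (ω : Ω) : ℝ :=
  ({ω | Y ω = 1 ∧ T ω = 1}).indicator (fun _ => a) ω +
  ({ω | Y ω = 1 ∧ T ω = 0}).indicator (fun _ => b) ω +
  ({ω | Y ω = 0 ∧ T ω = 1}).indicator (fun _ => c) ω +
  ({ω | Y ω = 0 ∧ T ω = 0}).indicator (fun _ => d) ω

/-- Appendix C.5 (variance-minimizing mixture): `ν ↦ Var((1−ν)Q₁ + νQ₂)` attains a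
unique minimum at `ν* = p₁(1−α) + p₀α = α(1−α)·E[Q₁²]`; equivalently
`ν* + P(Y = 1) = p₀ + p₁`; in particular when `α = 1/2`, `ν* = (p₀+p₁)/2 = P(Y=1)`. -/
theorem variance_minimizing_mixture
    {Ω : Type*} [MeasurableSpace Ω] (P : Measure Ω) [IsProbabilityMeasure P]
    (α p₀ p₁ : ℝ) (hα : α ∈ Ioo (0:ℝ) 1)
    (hp0 : p₀ ∈ Icc (0:ℝ) 1) (hp1 : p₁ ∈ Icc (0:ℝ) 1)
    (T Y : Ω → ℝ) (hTm : Measurable T) (hYm : Measurable Y)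
    (hT01 : ∀ ω, T ω = 0 ∨ T ω = 1) (hY01 : ∀ ω, Y ω = 0 ∨ Y ω = 1)
    (hTα : P {ω | T ω = 1} = ENNReal.ofReal α)
    (hjoint1 : P {ω | Y ω = 1 ∧ T ω = 1} = ENNReal.ofReal (p₁ * α))
    (hjoint0 : P {ω | Y ω = 1 ∧ T ω = 0} = ENNReal.ofReal (p₀ * (1 - α)))
    (Q₁ Q₂ : Ω → ℝ)
    (hQ1 : ∀ ω, Q₁ ω =
      Y ω * ((if T ω = 1 then 1 else 0) / α - (if T ω = 0 then 1 else 0) / (1 - α)))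
    (hQ2 : ∀ ω, Q₂ ω =
      (1 - Y ω) * ((if T ω = 0 then 1 else 0) / (1 - α) - (if T ω = 1 then 1 else 0) / α))
    (νstar : ℝ) (hνstar : νstar = p₁ * (1 - α) + p₀ * α) :
    (∀ ν : ℝ, variance (fun ω => (1 - νstar) * Q₁ ω + νstar * Q₂ ω) P ≤
        variance (fun ω => (1 - ν) * Q₁ ω + ν * Q₂ ω) P) ∧
    (∀ ν : ℝ, variance (fun ω => (1 - ν) * Q₁ ω + ν * Q₂ ω) P =
        variance (fun ω => (1 - νstar) * Q₁ ω + νstar * Q₂ ω) P → ν = νstar) ∧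
    νstar = α * (1 - α) * ∫ ω, (Q₁ ω) ^ 2 ∂P ∧
    νstar + (P {ω | Y ω = 1}).toReal = p₀ + p₁ ∧
    (α = 1 / 2 → νstar = (p₀ + p₁) / 2 ∧ νstar = (P {ω | Y ω = 1}).toReal) := by
  obtain ⟨hα0, hα1⟩ := hα
  have hαne : α ≠ 0 := ne_of_gt hα0
  have h1α : (0:ℝ) < 1 - α := by linarith
  have h1αne : (1:ℝ) - α ≠ 0 := ne_of_gt h1α
  have hfin : ∀ s : Set Ω, P s ≠ ⊤ := fun s => measure_ne_top P s
  -- measurable sets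
  have mY1 : MeasurableSet {ω | Y ω = 1} := hYm (measurableSet_singleton 1)
  have mY0 : MeasurableSet {ω | Y ω = 0} := hYm (measurableSet_singleton 0)
  have mT1 : MeasurableSet {ω | T ω = 1} := hTm (measurableSet_singleton 1)
  have mT0 : MeasurableSet {ω | T ω = 0} := hTm (measurableSet_singleton 0)
  have mS11 : MeasurableSet {ω | Y ω = 1 ∧ T ω = 1} := mY1.inter mT1
  have mS10 : MeasurableSet {ω | Y ω = 1 ∧ T ω = 0} := mY1.inter mT0
  have mS01 : MeasurableSet {ω | Y ω = 0 ∧ T ω = 1} := mY0.inter mT1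
  have mS00 : MeasurableSet {ω | Y ω = 0 ∧ T ω = 0} := mY0.inter mT0
  -- measures of atoms (as reals)
  have t11 : (P {ω | Y ω = 1 ∧ T ω = 1}).toReal = p₁ * α := by
    rw [hjoint1, ENNReal.toReal_ofReal (mul_nonneg hp1.1 hα0.le)]
  have t10 : (P {ω | Y ω = 1 ∧ T ω = 0}).toReal = p₀ * (1 - α) := by
    rw [hjoint0, ENNReal.toReal_ofReal (mul_nonneg hp0.1 h1α.le)]
  have hT1r : (P {ω | T ω = 1}).toReal = α := by
    rw [hTα, ENNReal.toReal_ofReal hα0.le]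
  have hcompl : {ω | T ω = 0} = {ω | T ω = 1}ᶜ := by
    ext ω; simp only [mem_setOf_eq, mem_compl_iff]
    rcases hT01 ω with h | h <;> simp [h]
  have hT0r : (P {ω | T ω = 0}).toReal = 1 - α := by
    rw [hcompl, measure_compl mT1 (hfin _), measure_univ,
      ENNReal.toReal_sub_of_le prob_le_one (by norm_num), hT1r]
    norm_num
  have hsplitT1 : {ω | T ω = 1} = {ω | Y ω = 1 ∧ T ω = 1} ∪ {ω | Y ω = 0 ∧ T ω = 1} := by
    ext ω; simp only [mem_setOf_eq, mem_union]
    rcases hY01 ω with h | h <;> simp [h]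
  have hdisjT1 : Disjoint {ω | Y ω = 1 ∧ T ω = 1} {ω | Y ω = 0 ∧ T ω = 1} := by
    rw [Set.disjoint_left]
    rintro ω ⟨h1, -⟩ ⟨h0, -⟩
    exact one_ne_zero (h1 ▸ h0)
  have t01 : (P {ω | Y ω = 0 ∧ T ω = 1}).toReal = (1 - p₁) * α := by
    have hu : (P {ω | T ω = 1}).toReal
        = p₁ * α + (P {ω | Y ω = 0 ∧ T ω = 1}).toReal := by
      rw [hsplitT1, measure_union hdisjT1 mS01, ENNReal.toReal_add (hfin _) (hfin _), t11]
    linear_combination hT1r - hu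
  have hsplitT0 : {ω | T ω = 0} = {ω | Y ω = 1 ∧ T ω = 0} ∪ {ω | Y ω = 0 ∧ T ω = 0} := by
    ext ω; simp only [mem_setOf_eq, mem_union]
    rcases hY01 ω with h | h <;> simp [h]
  have hdisjT0 : Disjoint {ω | Y ω = 1 ∧ T ω = 0} {ω | Y ω = 0 ∧ T ω = 0} := by
    rw [Set.disjoint_left]
    rintro ω ⟨h1, -⟩ ⟨h0, -⟩
    exact one_ne_zero (h1 ▸ h0)
  have t00 : (P {ω | Y ω = 0 ∧ T ω = 0}).toReal = (1 - p₀) * (1 - α) := by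
    have hu : (P {ω | T ω = 0}).toReal
        = p₀ * (1 - α) + (P {ω | Y ω = 0 ∧ T ω = 0}).toReal := by
      rw [hsplitT0, measure_union hdisjT0 mS00, ENNReal.toReal_add (hfin _) (hfin _), t10]
    linear_combination hT0r - hu
  have hsplitY1 : {ω | Y ω = 1} = {ω | Y ω = 1 ∧ T ω = 1} ∪ {ω | Y ω = 1 ∧ T ω = 0} := by
    ext ω; simp only [mem_setOf_eq, mem_union]
    rcases hT01 ω with h | h <;> simp [h]
  have hdisjY1 : Disjoint {ω | Y ω = 1 ∧ T ω = 1} {ω | Y ω = 1 ∧ T ω = 0} := by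
    rw [Set.disjoint_left]
    rintro ω ⟨-, h1⟩ ⟨-, h0⟩
    exact one_ne_zero (h1 ▸ h0)
  have tY1 : (P {ω | Y ω = 1}).toReal = p₁ * α + p₀ * (1 - α) := by
    rw [hsplitY1, measure_union hdisjY1 mS10, ENNReal.toReal_add (hfin _) (hfin _), t11, t10]
  -- pointwise identification of the mixture with a four-atom simple function
  have hpt : ∀ (ν : ℝ) (ω : Ω), (1 - ν) * Q₁ ω + ν * Q₂ ω
      = mixF Y T ((1-ν)/α) (-((1-ν)/(1-α))) (-(ν/α)) (ν/(1-α)) ω := by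
    intro ν ω
    rcases hY01 ω with hY | hY <;> rcases hT01 ω with hT | hT <;>
      simp [mixF, Set.indicator_apply, Set.mem_setOf_eq, hY, hT, hQ1 ω, hQ2 ω] <;> ring
  have hptQ1 : ∀ ω : Ω, Q₁ ω = mixF Y T (1/α) (-(1/(1-α))) 0 0 ω := by
    intro ω
    rcases hY01 ω with hY | hY <;> rcases hT01 ω with hT | hT <;>
      simp [mixF, Set.indicator_apply, Set.mem_setOf_eq, hY, hT, hQ1 ω]
  -- squares
  have hFsq : ∀ (a b c d : ℝ) (ω : Ω),
      mixF Y T a b c d ω ^ 2 = mixF Y T (a^2) (b^2) (c^2) (d^2) ω := by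
    intro a b c d ω
    rcases hY01 ω with hY | hY <;> rcases hT01 ω with hT | hT <;>
      simp [mixF, Set.indicator_apply, Set.mem_setOf_eq, hY, hT]
  -- moments
  have hFmem : ∀ a b c d : ℝ, MemLp (mixF Y T a b c d) 2 P := by
    intro a b c d
    exact (((memLp_indicator_const 2 mS11 a (Or.inr (hfin _))).add
      (memLp_indicator_const 2 mS10 b (Or.inr (hfin _)))).add
      (memLp_indicator_const 2 mS01 c (Or.inr (hfin _)))).add
      (memLp_indicator_const 2 mS00 d (Or.inr (hfin _)))
  have hInd : ∀ (s : Set Ω), MeasurableSet s → ∀ a : ℝ,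
      Integrable (s.indicator (fun _ => a)) P :=
    fun s hs a => (integrable_const a).indicator hs
  have hFint : ∀ a b c d : ℝ, ∫ ω, mixF Y T a b c d ω ∂P =
      a*(p₁*α) + b*(p₀*(1-α)) + c*((1-p₁)*α) + d*((1-p₀)*(1-α)) := by
    intro a b c d
    unfold mixF
    have h1 := hInd _ mS11 a
    have h2 := hInd _ mS10 b
    have h3 := hInd _ mS01 c
    have h4 := hInd _ mS00 d
    have h12 : Integrable (fun ω => ({ω | Y ω = 1 ∧ T ω = 1}).indicator (fun _ => a) ω
        + ({ω | Y ω = 1 ∧ T ω = 0}).indicator (fun _ => b) ω) P := h1.add h2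
    have h123 : Integrable (fun ω => ({ω | Y ω = 1 ∧ T ω = 1}).indicator (fun _ => a) ω
        + ({ω | Y ω = 1 ∧ T ω = 0}).indicator (fun _ => b) ω
        + ({ω | Y ω = 0 ∧ T ω = 1}).indicator (fun _ => c) ω) P := h12.add h3
    rw [integral_add h123 h4, integral_add h12 h3, integral_add h1 h2,
      integral_indicator_const a mS11, integral_indicator_const b mS10,
      integral_indicator_const c mS01, integral_indicator_const d mS00,
      smul_eq_mul, smul_eq_mul, smul_eq_mul, smul_eq_mul, measureReal_def, measureReal_def,
      measureReal_def, measureReal_def, t11, t10, t01, t00]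
    ring
  -- variance formula
  have hvar : ∀ ν : ℝ, variance (fun ω => (1 - ν) * Q₁ ω + ν * Q₂ ω) P =
      (((1-ν)/α)^2*(p₁*α) + ((1-ν)/(1-α))^2*(p₀*(1-α))
        + (ν/α)^2*((1-p₁)*α) + (ν/(1-α))^2*((1-p₀)*(1-α))) - (p₁ - p₀)^2 := by
    intro ν
    have hfe : (fun ω => (1 - ν) * Q₁ ω + ν * Q₂ ω)
        = mixF Y T ((1-ν)/α) (-((1-ν)/(1-α))) (-(ν/α)) (ν/(1-α)) := funext (hpt ν)
    have hsq' : (mixF Y T ((1-ν)/α) (-((1-ν)/(1-α))) (-(ν/α)) (ν/(1-α))) ^ 2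
        = mixF Y T (((1-ν)/α)^2) ((-((1-ν)/(1-α)))^2) ((-(ν/α))^2) ((ν/(1-α))^2) :=
      funext fun ω => hFsq _ _ _ _ ω
    rw [hfe, variance_eq_sub (hFmem _ _ _ _), hsq', hFint, hFint]
    have hmean : ((1-ν)/α)*(p₁*α) + (-((1-ν)/(1-α)))*(p₀*(1-α))
        + (-(ν/α))*((1-p₁)*α) + (ν/(1-α))*((1-p₀)*(1-α)) = p₁ - p₀ := by
      field_simp
      ring
    rw [hmean]
    ring
  -- the quadratic identity
  have key : ∀ ν : ℝ, variance (fun ω => (1 - ν) * Q₁ ω + ν * Q₂ ω) P =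
      variance (fun ω => (1 - νstar) * Q₁ ω + νstar * Q₂ ω) P
        + (ν - νstar)^2 / (α * (1 - α)) := by
    intro ν
    rw [hvar ν, hvar νstar, hνstar]
    field_simp
    ring
  refine ⟨?_, ?_, ?_, ?_, ?_⟩
  · intro ν
    rw [key ν]
    have : (0:ℝ) ≤ (ν - νstar)^2 / (α * (1 - α)) := by positivity
    linarith
  · intro ν h
    rw [key ν] at h
    have h2 : (ν - νstar)^2 / (α * (1 - α)) = 0 := by linarith
    have h3 : (ν - νstar)^2 = 0 := by
      rcases div_eq_zero_iff.mp h2 with h' | h'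
      · exact h'
      · exact absurd h' (by positivity)
    have := pow_eq_zero_iff (n := 2) (by norm_num) |>.mp h3
    linarith [this]
  · have hQsq : (fun ω => Q₁ ω ^ 2) = mixF Y T ((1/α)^2) ((-(1/(1-α)))^2) (0^2) (0^2) := by
      funext ω
      rw [hptQ1 ω, hFsq]
    rw [show (∫ ω, (Q₁ ω) ^ 2 ∂P) = ∫ ω, mixF Y T ((1/α)^2) ((-(1/(1-α)))^2) (0^2) (0^2) ω ∂P
        from by rw [← hQsq], hFint, hνstar]
    field_simp
    ring
  · rw [hνstar, tY1]
    ring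
  · intro hhalf
    subst hhalf
    constructor
    · rw [hνstar]; ring
    · rw [hνstar, tY1]; ring
end
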